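/- arXiv:1601.06187 — 9 statements merged into one kernel-verified Lean document; each statement's English description precedes it below -/
import Mathlib

section
/- For a probability distribution p on the natural numbers with mean n_a = Σ_m m·p(m) > 0, the normalized second-order correlation g^(2) = (Σ_m m(m-1)p(m)) / n_a^2 satisfies g^(2) ≥ ⌊n_a⌋(2n_a - ⌊n_a⌋ - 1)/n_a^2. -/
/-!
For all integers `k` and `m`, `m (m - 1) - k (2m - k - 1) = (m - k)(m - k - 1) ≥ 0`,
a product of two consecutive integers. Averaging against `p` gives
`∑ m (m - 1) p m ≥ k (2 n_a - k - 1)` for every integer `k`; take `k = ⌊n_a⌋`.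
-/

theorem Int.mul_two_mul_sub_sub_one_le (k m : ℤ) : k * (2 * m - k - 1) ≤ m * (m - 1) := by
  rcases le_or_gt m k with h | h <;> nlinarith

theorem int_mul_two_mul_tsum_sub_sub_one_le_tsum {p : ℕ → ℝ} (hp : ∀ m, 0 ≤ p m)
    (hsum1 : ∑' m, p m = 1) (h1 : Summable fun m : ℕ => (m : ℝ) * p m)
    (h2 : Summable fun m : ℕ => (m : ℝ) * ((m : ℝ) - 1) * p m) (k : ℤ) :
    (k : ℝ) * (2 * ∑' m : ℕ, (m : ℝ) * p m - k - 1) ≤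
      ∑' m : ℕ, (m : ℝ) * ((m : ℝ) - 1) * p m := by
  have hp_summable : Summable p := by
    by_contra h
    simp [tsum_eq_zero_of_not_summable h] at hsum1
  have hpointwise (m : ℕ) : (k : ℝ) * (2 * m - k - 1) * p m ≤ m * (m - 1) * p m := by
    refine mul_le_mul_of_nonneg_right ?_ (hp m)
    exact_mod_cast Int.mul_two_mul_sub_sub_one_le k m
  have hlhs_summable : Summable fun m : ℕ => (k : ℝ) * (2 * m - k - 1) * p m :=
    ((h1.mul_left (2 * (k : ℝ))).add (hp_summable.mul_left (-(k * (k + 1) : ℝ)))).congr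
      fun m => by ring
  calc (k : ℝ) * (2 * ∑' m : ℕ, (m : ℝ) * p m - k - 1)
      = ∑' m : ℕ, (2 * k * ((m : ℝ) * p m) + -(k * (k + 1)) * p m) := by
        rw [(h1.mul_left _).tsum_add (hp_summable.mul_left _), tsum_mul_left, tsum_mul_left,
          hsum1]
        ring
    _ = ∑' m : ℕ, (k : ℝ) * (2 * m - k - 1) * p m := tsum_congr fun m => by ring
    _ ≤ _ := hlhs_summable.tsum_le_tsum hpointwise h2

theorem stmt0_general (p : ℕ → ℝ) (hp : ∀ m, 0 ≤ p m)
    (hsum1 : ∑' m : ℕ, p m = 1)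
    (h1 : Summable fun m : ℕ => (m : ℝ) * p m)
    (h2 : Summable fun m : ℕ => (m : ℝ) * ((m : ℝ) - 1) * p m)
    (na : ℝ) (hna : na = ∑' m : ℕ, (m : ℝ) * p m) :
    (∑' m : ℕ, (m : ℝ) * ((m : ℝ) - 1) * p m) / na ^ 2 ≥
      (⌊na⌋ : ℝ) * (2 * na - (⌊na⌋ : ℝ) - 1) / na ^ 2 := by
  subst hna
  exact div_le_div_of_nonneg_right
    (int_mul_two_mul_tsum_sub_sub_one_le_tsum hp hsum1 h1 h2 _) (sq_nonneg _)

/-- For a probability distribution `p` on ℕ with mean `na > 0`, the normalized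
second-order correlation `g² = (∑ m(m-1)p m)/na²` satisfies
`g² ≥ ⌊na⌋(2na - ⌊na⌋ - 1)/na²`. -/
theorem stmt0 (p : ℕ → ℝ) (hp : ∀ m, 0 ≤ p m)
    (hsum1 : ∑' m : ℕ, p m = 1)
    (h1 : Summable fun m : ℕ => (m : ℝ) * p m)
    (h2 : Summable fun m : ℕ => (m : ℝ) * ((m : ℝ) - 1) * p m)
    (na : ℝ) (hna : na = ∑' m : ℕ, (m : ℝ) * p m) (hpos : 0 < na) :
    (∑' m : ℕ, (m : ℝ) * ((m : ℝ) - 1) * p m) / na ^ 2 ≥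
      (⌊na⌋ : ℝ) * (2 * na - (⌊na⌋ : ℝ) - 1) / na ^ 2 :=
  stmt0_general p hp hsum1 h1 h2 na hna
end

section
/- For any real n_a > 0, the probability distribution supported on the two consecutive integers ⌊n_a⌋ and ⌊n_a⌋+1, with p(⌊n_a⌋) = ⌊n_a⌋ - n_a + 1 and p(⌊n_a⌋+1) = n_a - ⌊n_a⌋, has mean exactly n_a and its second-order correlation equals g^(2) = ⌊n_a⌋(2n_a - ⌊n_a⌋ - 1)/n_a^2, achieving the lower bound. -/
theorem tsum_eq_add_of_eq_zero {α M : Type*} [AddCommMonoid M] [TopologicalSpace M]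
    {a b : α} (hab : a ≠ b) (f : α → M) (hf : ∀ m, m ≠ a → m ≠ b → f m = 0) :
    ∑' m, f m = f a + f b := by
  classical
  rw [tsum_eq_sum (s := {a, b}) fun m hm => by simp_all, Finset.sum_pair hab]

/-- The Fock duo supported on ⌊na⌋ and ⌊na⌋+1 with weights ⌊na⌋+1-na and na-⌊na⌋
has mean exactly `na` and second-order correlation `⌊na⌋(2na-⌊na⌋-1)/na²`. -/
theorem stmt1 (na : ℝ) (hpos : 0 < na)
    (p : ℕ → ℝ)
    (hdef : p = fun m => if m = (⌊na⌋).toNat then (⌊na⌋ : ℝ) + 1 - na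
      else if m = (⌊na⌋).toNat + 1 then na - (⌊na⌋ : ℝ) else 0) :
    (∑' m : ℕ, p m = 1) ∧
    (∑' m : ℕ, (m : ℝ) * p m = na) ∧
    (∑' m : ℕ, (m : ℝ) * ((m : ℝ) - 1) * p m) / na ^ 2 =
      (⌊na⌋ : ℝ) * (2 * na - (⌊na⌋ : ℝ) - 1) / na ^ 2 := by
  set n := (⌊na⌋).toNat
  have hn : (n : ℝ) = ⌊na⌋ := by
    exact_mod_cast Int.toNat_of_nonneg (Int.floor_nonneg.mpr hpos.le)
  have hpn : p n = n + 1 - na := by simp [hdef, hn]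
  have hpn1 : p (n + 1) = na - n := by simp [hdef, hn]
  have hduo (g : ℕ → ℝ) : ∑' m, g m * p m = g n * p n + g (n + 1) * p (n + 1) :=
    tsum_eq_add_of_eq_zero n.succ_ne_self.symm _ fun m h h' => by simp [hdef, h, h']
  refine ⟨?_, ?_, ?_⟩
  · simpa [hpn, hpn1] using hduo 1
  · rw [hduo, hpn, hpn1]; push_cast; ring
  · rw [hduo, hpn, hpn1, ← hn]; push_cast; ring
end

section
/- For any distribution p on ℕ with mean n_a > 0, writing G = Σ_m m(m-1)p(m) and G_* = ⌊n_a⌋(2n_a - ⌊n_a⌋ - 1), one has G - G_* = Σ_{k ∉ {0,1}} k(k-1)·p(⌊n_a⌋ + k), where the sum is over integers k ≥ -⌊n_a⌋ with k ≠ 0,1; in particular G - G_* ≥ 0, with equality iff p is supported on {⌊n_a⌋, ⌊n_a⌋+1}. -/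
/-!
Expanding `(m - c)(m - c - 1) = m(m - 1) - 2cm + c(c + 1)` and summing against `p` gives
`∑ (m - c)(m - c - 1) p m = G - c(2 n_a - c - 1)` for every real shift `c`. For
`c = ⌊n_a⌋`, a natural number as `n_a ≥ 0`, the weight `(m - c)(m - c - 1)` is a product of
two consecutive integers, hence nonnegative and zero exactly at `m = c, c + 1`.
-/

section ShiftedFactorialMoment

variable {p : ℕ → ℝ}

theorem sub_mul_sub_sub_one_mul_eq (c m : ℝ) (pm : ℝ) :
    (m - c) * (m - c - 1) * pm = m * (m - 1) * pm - (2 * c * (m * pm) - c * (c + 1) * pm) := by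
  ring

theorem summable_sub_mul_sub_sub_one_mul (c : ℝ) (hp : Summable p)
    (h1 : Summable fun m : ℕ => (m : ℝ) * p m)
    (h2 : Summable fun m : ℕ => (m : ℝ) * ((m : ℝ) - 1) * p m) :
    Summable fun m : ℕ => ((m : ℝ) - c) * ((m : ℝ) - c - 1) * p m := by
  simp only [sub_mul_sub_sub_one_mul_eq c]
  exact h2.sub ((h1.mul_left (2 * c)).sub (hp.mul_left (c * (c + 1))))

theorem tsum_sub_mul_sub_sub_one_mul (c μ : ℝ) (hp : Summable p) (hsum1 : ∑' m, p m = 1)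
    (h1 : Summable fun m : ℕ => (m : ℝ) * p m)
    (h2 : Summable fun m : ℕ => (m : ℝ) * ((m : ℝ) - 1) * p m)
    (hμ : ∑' m : ℕ, (m : ℝ) * p m = μ) :
    ∑' m : ℕ, ((m : ℝ) - c) * ((m : ℝ) - c - 1) * p m =
      (∑' m : ℕ, (m : ℝ) * ((m : ℝ) - 1) * p m) - c * (2 * μ - c - 1) := by
  simp only [sub_mul_sub_sub_one_mul_eq c]
  rw [h2.tsum_sub ((h1.mul_left _).sub (hp.mul_left _)),
    (h1.mul_left _).tsum_sub (hp.mul_left _), tsum_mul_left, tsum_mul_left, hsum1, hμ]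
  ring

end ShiftedFactorialMoment

theorem natCast_sub_mul_natCast_sub_sub_one_nonneg (m N : ℕ) :
    0 ≤ ((m : ℝ) - N) * ((m : ℝ) - N - 1) := by
  rcases le_or_gt m N with h | h
  · have : (m : ℝ) ≤ N := by exact_mod_cast h
    nlinarith
  · have : (N : ℝ) + 1 ≤ m := by exact_mod_cast h
    nlinarith

theorem natCast_sub_mul_natCast_sub_sub_one_eq_zero_iff (m N : ℕ) :
    ((m : ℝ) - N) * ((m : ℝ) - N - 1) = 0 ↔ m = N ∨ m = N + 1 := by
  rw [mul_eq_zero, sub_sub, sub_eq_zero, sub_eq_zero]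
  norm_cast

theorem stmt2_general (p : ℕ → ℝ) (hp : ∀ m, 0 ≤ p m)
    (hsum1 : ∑' m : ℕ, p m = 1)
    (h1 : Summable fun m : ℕ => (m : ℝ) * p m)
    (h2 : Summable fun m : ℕ => (m : ℝ) * ((m : ℝ) - 1) * p m)
    (na : ℝ) (hna : na = ∑' m : ℕ, (m : ℝ) * p m) :
    ((∑' m : ℕ, (m : ℝ) * ((m : ℝ) - 1) * p m) - (⌊na⌋ : ℝ) * (2 * na - (⌊na⌋ : ℝ) - 1) =
      ∑' m : ℕ, (if m = (⌊na⌋).toNat ∨ m = (⌊na⌋).toNat + 1 then 0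
        else ((m : ℝ) - (⌊na⌋ : ℝ)) * ((m : ℝ) - (⌊na⌋ : ℝ) - 1) * p m)) ∧
    (0 ≤ (∑' m : ℕ, (m : ℝ) * ((m : ℝ) - 1) * p m) - (⌊na⌋ : ℝ) * (2 * na - (⌊na⌋ : ℝ) - 1)) ∧
    ((∑' m : ℕ, (m : ℝ) * ((m : ℝ) - 1) * p m) - (⌊na⌋ : ℝ) * (2 * na - (⌊na⌋ : ℝ) - 1) = 0 ↔
      ∀ m, m ≠ (⌊na⌋).toNat → m ≠ (⌊na⌋).toNat + 1 → p m = 0) := by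
  have hsp : Summable p := by
    by_contra h
    simp [tsum_eq_zero_of_not_summable h] at hsum1
  obtain ⟨N, hN⟩ := Int.eq_ofNat_of_zero_le (Int.floor_nonneg.mpr (hna ▸ tsum_nonneg
    fun m => mul_nonneg (Nat.cast_nonneg m) (hp m)))
  simp only [hN, Int.toNat_natCast, Int.cast_natCast]
  set g : ℕ → ℝ := fun m => ((m : ℝ) - N) * ((m : ℝ) - N - 1) * p m
  have hg : ∀ m, 0 ≤ g m := fun m =>
    mul_nonneg (natCast_sub_mul_natCast_sub_sub_one_nonneg m N) (hp m)
  rw [← tsum_sub_mul_sub_sub_one_mul N na hsp hsum1 h1 h2 hna.symm]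
  refine ⟨tsum_congr fun m => ?_, tsum_nonneg hg, ?_⟩
  · split_ifs with hm
    · simp [(natCast_sub_mul_natCast_sub_sub_one_eq_zero_iff m N).mpr hm]
    · rfl
  · rw [← (summable_sub_mul_sub_sub_one_mul N hsp h1 h2).hasSum_iff,
      hasSum_zero_iff_of_nonneg hg, funext_iff]
    refine forall_congr' fun m => ?_
    simp only [g, Pi.zero_apply, mul_eq_zero, natCast_sub_mul_natCast_sub_sub_one_eq_zero_iff m N]
    tauto

/-- For a distribution `p` on ℕ with mean `na > 0`, writing `G = ∑ m(m-1)p m` and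
`G* = ⌊na⌋(2na - ⌊na⌋ - 1)`, one has
`G - G* = ∑_{k∉{0,1}} k(k-1) p(⌊na⌋+k)` (reindexed over m = ⌊na⌋+k, k = m - ⌊na⌋);
in particular `G - G* ≥ 0`, with equality iff `p` is supported on `{⌊na⌋, ⌊na⌋+1}`. -/
theorem stmt2 (p : ℕ → ℝ) (hp : ∀ m, 0 ≤ p m)
    (hsum1 : ∑' m : ℕ, p m = 1)
    (h1 : Summable fun m : ℕ => (m : ℝ) * p m)
    (h2 : Summable fun m : ℕ => (m : ℝ) * ((m : ℝ) - 1) * p m)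
    (na : ℝ) (hna : na = ∑' m : ℕ, (m : ℝ) * p m) (hpos : 0 < na) :
    ((∑' m : ℕ, (m : ℝ) * ((m : ℝ) - 1) * p m) - (⌊na⌋ : ℝ) * (2 * na - (⌊na⌋ : ℝ) - 1) =
      ∑' m : ℕ, (if m = (⌊na⌋).toNat ∨ m = (⌊na⌋).toNat + 1 then 0
        else ((m : ℝ) - (⌊na⌋ : ℝ)) * ((m : ℝ) - (⌊na⌋ : ℝ) - 1) * p m)) ∧
    (0 ≤ (∑' m : ℕ, (m : ℝ) * ((m : ℝ) - 1) * p m) - (⌊na⌋ : ℝ) * (2 * na - (⌊na⌋ : ℝ) - 1)) ∧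
    ((∑' m : ℕ, (m : ℝ) * ((m : ℝ) - 1) * p m) - (⌊na⌋ : ℝ) * (2 * na - (⌊na⌋ : ℝ) - 1) = 0 ↔
      ∀ m, m ≠ (⌊na⌋).toNat → m ≠ (⌊na⌋).toNat + 1 → p m = 0) :=
  stmt2_general p hp hsum1 h1 h2 na hna
end

section
/- There exists a quantum state (probability distribution on Fock states) with mean photon number n_a > 1 and g^(2) < 1/2; concretely, the equal-weight Fock duo with p(1) = p(2) = 1/2 has n_a = 3/2 and g^(2) = 4/9 < 1/2. -/
noncomputable def fockDuo (m : ℕ) : ℝ :=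
  if m = 1 then 1 / 2 else if m = 2 then 1 / 2 else 0

lemma fockDuo_nonneg (m : ℕ) : 0 ≤ fockDuo m := by
  unfold fockDuo; split_ifs <;> norm_num

lemma tsum_mul_fockDuo (f : ℕ → ℝ) : ∑' m, f m * fockDuo m = (f 1 + f 2) / 2 := by
  have hsupp : ∀ m ∉ ({1, 2} : Finset ℕ), f m * fockDuo m = 0 := by
    intro m hm
    simp only [Finset.mem_insert, Finset.mem_singleton, not_or] at hm
    simp [fockDuo, hm.1, hm.2]
  rw [tsum_eq_sum hsupp, Finset.sum_pair (by norm_num)]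
  norm_num [fockDuo]
  ring

/-- The equal-weight Fock duo p(1)=p(2)=1/2 has mean 3/2 > 1 and g² = 4/9 < 1/2,
disproving the single-particle criterion. -/
theorem stmt3 :
    ∃ p : ℕ → ℝ, (∀ m, 0 ≤ p m) ∧ (∑' m : ℕ, p m = 1) ∧
      (∑' m : ℕ, (m : ℝ) * p m = 3 / 2) ∧ (1 : ℝ) < 3 / 2 ∧
      (∑' m : ℕ, (m : ℝ) * ((m : ℝ) - 1) * p m) / (3 / 2 : ℝ) ^ 2 = 4 / 9 ∧
      (4 / 9 : ℝ) < 1 / 2 ∧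
      p = fun m => if m = 1 then (1 / 2 : ℝ) else if m = 2 then 1 / 2 else 0 := by
  refine ⟨fockDuo, fockDuo_nonneg, ?_, ?_, by norm_num, ?_, by norm_num, rfl⟩
  · simpa using tsum_mul_fockDuo fun _ => 1
  · rw [tsum_mul_fockDuo]; norm_num
  · rw [tsum_mul_fockDuo]; norm_num
end

section
/- For any distribution p on ℕ with mean n_a > 0 and any integer n with 1 ≤ n ≤ ⌊n_a⌋, the n-th order correlation g^(n) = (Σ_m m!/(m-n)!·p(m))/n_a^n satisfies g^(n) ≥ (⌊n_a⌋!/((⌊n_a⌋-n)!·n_a^n))·(1 + n(n_a - ⌊n_a⌋)/(⌊n_a⌋ + 1 - n)), and this bound is attained by the Fock duo with mean n_a. -/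
/-!
The falling factorial `F m = m (m-1) ⋯ (m-n+1)` is discretely convex in `m`: its increments
`F (m+1) - F m = n · m(m-1)⋯(m-n+2)` increase with `m`. Hence the chord of `F` through `N` and
`N + 1` lies below `F` on all of `ℕ`, and averaging against `p` gives
`E[F] ≥ F N + (n_a - N) (F (N+1) - F N)`. The right-hand side is exactly `E[F]` for the Fock duo,
the distribution on `{N, N+1}` with mean `n_a`, and equals `N!/(N-n)! · (1 + n (n_a - N)/(N+1-n))`.
-/

open Finset

lemma add_mul_increment_le_of_monotone {f : ℕ → ℝ} (hf : Monotone fun k => f (k + 1) - f k)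
    (N m : ℕ) : f N + ((m : ℝ) - N) * (f (N + 1) - f N) ≤ f m := by
  rcases le_total N m with h | h
  · have hsum := card_nsmul_le_sum (Ico N m) (fun k => f (k + 1) - f k) _
      fun k hk => hf (mem_Ico.1 hk).1
    rw [sum_Ico_sub f h, Nat.card_Ico, nsmul_eq_mul, Nat.cast_sub h] at hsum
    linarith
  · have hsum := sum_le_card_nsmul (Ico m N) (fun k => f (k + 1) - f k) _
      fun k hk => hf (mem_Ico.1 hk).2.le
    rw [sum_Ico_sub f h, Nat.card_Ico, nsmul_eq_mul, Nat.cast_sub h] at hsum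
    linarith

lemma cast_succ_descFactorial_succ_sub (k j : ℕ) :
    ((k + 1).descFactorial (j + 1) : ℝ) - k.descFactorial (j + 1)
      = (j + 1) * k.descFactorial j := by
  rw [Nat.succ_descFactorial_succ, Nat.descFactorial_succ]
  rcases le_or_gt j k with h | h
  · push_cast [Nat.cast_sub h]
    ring
  · simp [Nat.descFactorial_eq_zero_iff_lt.2 h]

lemma monotone_descFactorial_increment (n : ℕ) :
    Monotone fun k : ℕ => ((k + 1).descFactorial n : ℝ) - k.descFactorial n := by
  rcases n with _ | j
  · simp [monotone_const]
  · intro a b hab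
    simp only [cast_succ_descFactorial_succ_sub]
    gcongr

lemma cast_descFactorial_le_chord (n N m : ℕ) :
    (N.descFactorial n : ℝ) + ((m : ℝ) - N) * ((N + 1).descFactorial n - N.descFactorial n)
      ≤ m.descFactorial n :=
  add_mul_increment_le_of_monotone (f := fun k => (k.descFactorial n : ℝ))
    (monotone_descFactorial_increment n) N m

lemma factorial_div_mul_eq_descFactorial_chord {n N : ℕ} (hnN : n ≤ N) (x : ℝ) :
    (N.factorial : ℝ) / (N - n).factorial * (1 + n * (x - N) / (N + 1 - n))
      = N.descFactorial n + (x - N) * ((N + 1).descFactorial n - N.descFactorial n) := by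
  have hfac : (N.factorial : ℝ) / (N - n).factorial = N.descFactorial n := by
    rw [div_eq_iff (by positivity), ← Nat.factorial_mul_descFactorial hnN]
    push_cast
    ring
  rw [hfac]
  rcases n with _ | j
  · simp
  · have hpos : (0 : ℝ) < N + 1 - (j + 1 : ℕ) := by
      have : ((j + 1 : ℕ) : ℝ) ≤ N := by exact_mod_cast hnN
      linarith
    rw [cast_succ_descFactorial_succ_sub, Nat.descFactorial_succ,
      Nat.cast_mul, Nat.cast_sub (by omega : j ≤ N)]
    field_simp
    push_cast
    ring

lemma add_mul_tsum_sub_le_tsum_mul {p f : ℕ → ℝ} {a b c : ℝ} (hp : ∀ m, 0 ≤ p m)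
    (hp1 : HasSum p 1) (hmean : Summable fun m : ℕ => (m : ℝ) * p m)
    (hf : Summable fun m => f m * p m) (hle : ∀ m : ℕ, a + ((m : ℝ) - c) * b ≤ f m) :
    a + ((∑' m : ℕ, (m : ℝ) * p m) - c) * b ≤ ∑' m, f m * p m := by
  have hline : ∑' m : ℕ, ((a - c * b) * p m + b * ((m : ℝ) * p m))
      = a + ((∑' m : ℕ, (m : ℝ) * p m) - c) * b := by
    rw [(hp1.summable.mul_left _).tsum_add (hmean.mul_left b), tsum_mul_left, tsum_mul_left,
      hp1.tsum_eq]
    ring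
  rw [← hline]
  refine (hp1.summable.mul_left _).add (hmean.mul_left b) |>.tsum_le_tsum (fun m => ?_) hf
  calc (a - c * b) * p m + b * ((m : ℝ) * p m) = (a + ((m : ℝ) - c) * b) * p m := by ring
    _ ≤ f m * p m := mul_le_mul_of_nonneg_right (hle m) (hp m)

lemma tsum_mul_two_point (f : ℕ → ℝ) (N : ℕ) (x : ℝ) :
    ∑' m : ℕ, f m * (if m = N then (N : ℝ) + 1 - x else if m = N + 1 then x - N else 0)
      = f N + (x - N) * (f (N + 1) - f N) := by
  rw [tsum_eq_sum (s := {N, N + 1}) fun m hm => by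
    simp only [mem_insert, mem_singleton, not_or] at hm
    simp [hm.1, hm.2]]
  rw [sum_pair (by omega), if_pos rfl, if_neg (by omega), if_pos rfl]
  ring

lemma summable_mul_of_le_pow {p f : ℕ → ℝ} {n : ℕ} (hp : ∀ m, 0 ≤ p m)
    (hmom : Summable fun m : ℕ => (m : ℝ) ^ n * p m) (hf0 : ∀ m, 0 ≤ f m)
    (hfle : ∀ m : ℕ, f m ≤ (m : ℝ) ^ n) : Summable fun m => f m * p m :=
  hmom.of_nonneg_of_le (fun m => mul_nonneg (hf0 m) (hp m))
    fun m => mul_le_mul_of_nonneg_right (hfle m) (hp m)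

theorem stmt5_general (p : ℕ → ℝ) (hp : ∀ m, 0 ≤ p m)
    (hsum1 : ∑' m : ℕ, p m = 1)
    (n : ℕ) (hn : 1 ≤ n)
    (hmom : Summable fun m : ℕ => (m : ℝ) ^ n * p m)
    (na : ℝ) (hna : na = ∑' m : ℕ, (m : ℝ) * p m)
    (N : ℕ) (hnN : n ≤ N) :
    ((∑' m : ℕ, (∏ i ∈ Finset.range n, ((m : ℝ) - i)) * p m) / na ^ n ≥
      ((N.factorial : ℝ) / ((N - n).factorial : ℝ)) / na ^ n *
        (1 + (n : ℝ) * (na - (N : ℝ)) / ((N : ℝ) + 1 - (n : ℝ)))) ∧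
    (∀ q : ℕ → ℝ,
      (q = fun m => if m = N then (N : ℝ) + 1 - na
        else if m = N + 1 then na - (N : ℝ) else 0) →
      (∑' m : ℕ, (∏ i ∈ Finset.range n, ((m : ℝ) - i)) * q m) / na ^ n =
        ((N.factorial : ℝ) / ((N - n).factorial : ℝ)) / na ^ n *
          (1 + (n : ℝ) * (na - (N : ℝ)) / ((N : ℝ) + 1 - (n : ℝ)))) := by
  have hprod (m : ℕ) : ∏ i ∈ range n, ((m : ℝ) - i) = m.descFactorial n := by
    rw [← descPochhammer_eval_eq_prod_range, descPochhammer_eval_eq_descFactorial]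
  have hp1 : HasSum p 1 := by
    refine hsum1 ▸ (Summable.hasSum <| by_contra fun h => ?_)
    simp [tsum_eq_zero_of_not_summable h] at hsum1
  have hmean : Summable fun m : ℕ => (m : ℝ) * p m :=
    summable_mul_of_le_pow hp hmom (fun m => m.cast_nonneg) fun m => by
      exact_mod_cast Nat.le_self_pow (n := n) (by omega) m
  have hF : Summable fun m : ℕ => (m.descFactorial n : ℝ) * p m :=
    summable_mul_of_le_pow hp hmom (fun m => by positivity) fun m => by
      exact_mod_cast Nat.descFactorial_le_pow m n
  have hna0 : 0 ≤ na := hna ▸ tsum_nonneg fun m => mul_nonneg m.cast_nonneg (hp m)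
  simp only [hprod, div_mul_eq_mul_div, factorial_div_mul_eq_descFactorial_chord hnN]
  refine ⟨div_le_div_of_nonneg_right ?_ (by positivity), ?_⟩
  · exact hna ▸ add_mul_tsum_sub_le_tsum_mul hp hp1 hmean hF (cast_descFactorial_le_chord n N)
  · rintro q rfl
    rw [tsum_mul_two_point (fun m => (m.descFactorial n : ℝ))]

/-- For any distribution `p` with mean `na > 0` and `1 ≤ n ≤ ⌊na⌋`, the n-th order
correlation `g⁽ⁿ⁾ = (∑ m!/(m-n)! p m)/naⁿ` (falling factorial, zero for m < n)
satisfies the Fock-duo bound, which is attained by the Fock duo of mean `na`. -/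
theorem stmt5 (p : ℕ → ℝ) (hp : ∀ m, 0 ≤ p m)
    (hsum1 : ∑' m : ℕ, p m = 1)
    (n : ℕ) (hn : 1 ≤ n)
    (hmom : Summable fun m : ℕ => (m : ℝ) ^ n * p m)
    (na : ℝ) (hna : na = ∑' m : ℕ, (m : ℝ) * p m) (hpos : 0 < na)
    (N : ℕ) (hN : N = (⌊na⌋).toNat) (hnN : n ≤ N) :
    ((∑' m : ℕ, (∏ i ∈ Finset.range n, ((m : ℝ) - i)) * p m) / na ^ n ≥
      ((N.factorial : ℝ) / ((N - n).factorial : ℝ)) / na ^ n *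
        (1 + (n : ℝ) * (na - (N : ℝ)) / ((N : ℝ) + 1 - (n : ℝ)))) ∧
    (∀ q : ℕ → ℝ,
      (q = fun m => if m = N then (N : ℝ) + 1 - na
        else if m = N + 1 then na - (N : ℝ) else 0) →
      (∑' m : ℕ, (∏ i ∈ Finset.range n, ((m : ℝ) - i)) * q m) / na ^ n =
        ((N.factorial : ℝ) / ((N - n).factorial : ℝ)) / na ^ n *
          (1 + (n : ℝ) * (na - (N : ℝ)) / ((N : ℝ) + 1 - (n : ℝ)))) :=
  stmt5_general p hp hsum1 n hn hmom na hna N hnN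
end

section
/- For 0 < n_a < 1 and any g^(2) > 0, there exists a probability distribution on {0, 1, k} for sufficiently large integer k, with p(0) = (g^(2)·n_a² + k(1-n_a))/k, p(1) = (k(1-p(0)) - n_a)/(k-1), and remaining weight on k, having mean n_a and second-order correlation exactly g^(2). -/
/-! Put mass `p₀` at `0`, `p₁` at `1` and `pₖ` at `k`. The constraints "total mass 1, mean `nₐ`,
factorial moment `k(k-1)pₖ = g⁽²⁾nₐ²`" force `pₖ = g⁽²⁾nₐ²/(k(k-1))` and
`p₁ = nₐ(k - 1 - g⁽²⁾nₐ)/(k-1)`, which is what the explicit weights simplify to. They are all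
nonnegative as soon as `k - 1 ≥ g⁽²⁾nₐ`, so `k = ⌈g⁽²⁾nₐ⌉₊ + 2` works. -/

theorem tsum_eq_add_add_of_eq_zero {α : Type*} [AddCommMonoid α] [TopologicalSpace α]
    {f : ℕ → α} {a b c : ℕ} (hab : a ≠ b) (hac : a ≠ c) (hbc : b ≠ c)
    (hf : ∀ m, m ≠ a → m ≠ b → m ≠ c → f m = 0) :
    ∑' m, f m = f a + f b + f c := by
  rw [tsum_eq_sum (s := {a, b, c}) fun m hm => by
      simp only [Finset.mem_insert, Finset.mem_singleton, not_or] at hm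
      exact hf m hm.1 hm.2.1 hm.2.2,
    Finset.sum_insert (by simp [hab, hac]), Finset.sum_pair hbc, add_assoc]

def threePoint (k : ℕ) (q₀ q₁ qₖ : ℝ) (m : ℕ) : ℝ :=
  if m = 0 then q₀ else if m = 1 then q₁ else if m = k then qₖ else 0

theorem tsum_mul_threePoint {k : ℕ} (hk : 1 < k) (q₀ q₁ qₖ : ℝ) (g : ℕ → ℝ) :
    ∑' m, g m * threePoint k q₀ q₁ qₖ m = g 0 * q₀ + g 1 * q₁ + g k * qₖ := by
  rw [tsum_eq_add_add_of_eq_zero (c := k) zero_ne_one (by omega) (by omega)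
    fun m h₀ h₁ hm => by simp [threePoint, h₀, h₁, hm]]
  simp [threePoint, show k ≠ 0 by omega, show k ≠ 1 by omega]

theorem tsum_threePoint {k : ℕ} (hk : 1 < k) (q₀ q₁ qₖ : ℝ) :
    ∑' m, threePoint k q₀ q₁ qₖ m = q₀ + q₁ + qₖ := by
  simpa using tsum_mul_threePoint hk q₀ q₁ qₖ 1

theorem threePoint_nonneg {k : ℕ} {q₀ q₁ qₖ : ℝ} (h₀ : 0 ≤ q₀) (h₁ : 0 ≤ q₁) (hₖ : 0 ≤ qₖ)
    (m : ℕ) : 0 ≤ threePoint k q₀ q₁ qₖ m := by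
  unfold threePoint
  split_ifs <;> first | assumption | exact le_rfl

section Weights

variable {n g k : ℝ}

theorem mul_one_sub_div_sub_eq (hk : k ≠ 0) :
    k * (1 - (g * n ^ 2 + k * (1 - n)) / k) - n = n * (k - 1 - g * n) := by
  field_simp
  ring

theorem one_sub_sub_div_sub_one_eq (hk : k ≠ 0) (hk₁ : k - 1 ≠ 0) :
    1 - (g * n ^ 2 + k * (1 - n)) / k - (k * (1 - (g * n ^ 2 + k * (1 - n)) / k) - n) / (k - 1)
      = g * n ^ 2 / (k * (k - 1)) := by
  rw [mul_one_sub_div_sub_eq hk]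
  field_simp
  ring

end Weights

/-- For 0 < na < 1 and any g² > 0, there is a distribution on {0, 1, k} for a
sufficiently large integer k, with the explicit weights
p0 = (g²na² + k(1-na))/k, p1 = (k(1-p0)-na)/(k-1) and 1-p0-p1 on k, having mean
na and second-order correlation exactly g². -/
theorem stmt8 (na g2 : ℝ) (hna0 : 0 < na) (hna1 : na < 1) (hg2 : 0 < g2) :
    ∃ (k : ℕ) (p : ℕ → ℝ), 1 < k ∧
      (p = fun m =>
        if m = 0 then (g2 * na ^ 2 + (k : ℝ) * (1 - na)) / (k : ℝ)
        else if m = 1 then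
          ((k : ℝ) * (1 - (g2 * na ^ 2 + (k : ℝ) * (1 - na)) / (k : ℝ)) - na) / ((k : ℝ) - 1)
        else if m = k then
          1 - (g2 * na ^ 2 + (k : ℝ) * (1 - na)) / (k : ℝ)
            - ((k : ℝ) * (1 - (g2 * na ^ 2 + (k : ℝ) * (1 - na)) / (k : ℝ)) - na) / ((k : ℝ) - 1)
        else 0) ∧
      (∀ m, 0 ≤ p m) ∧
      (∑' m : ℕ, p m = 1) ∧
      (∑' m : ℕ, (m : ℝ) * p m = na) ∧
      (∑' m : ℕ, (m : ℝ) * ((m : ℝ) - 1) * p m) / na ^ 2 = g2 := by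
  set k : ℕ := ⌈g2 * na⌉₊ + 2 with hk_def
  have hk : 1 < k := by omega
  have hk_large : g2 * na ≤ (k : ℝ) - 1 := by
    have := Nat.le_ceil (g2 * na)
    rw [hk_def]; push_cast; linarith
  have hk₀ : (k : ℝ) ≠ 0 := by positivity
  have hk₁ : (0 : ℝ) < k - 1 := by linarith [mul_pos hg2 hna0]
  have h₀ : 0 ≤ (g2 * na ^ 2 + k * (1 - na)) / k := by
    have : 0 ≤ (k : ℝ) * (1 - na) := mul_nonneg k.cast_nonneg (by linarith)
    positivity
  have h₁ := mul_one_sub_div_sub_eq (g := g2) (n := na) hk₀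
  have hₖ := one_sub_sub_div_sub_one_eq (g := g2) (n := na) hk₀ hk₁.ne'
  refine ⟨k, threePoint k _ _ _, hk, rfl, threePoint_nonneg h₀ ?_ ?_, ?_, ?_, ?_⟩
  · rw [h₁]; exact div_nonneg (mul_nonneg hna0.le (by linarith)) hk₁.le
  · rw [hₖ]; positivity
  · rw [tsum_threePoint hk]
    ring
  · rw [tsum_mul_threePoint hk, hₖ, h₁]
    push_cast
    field_simp
    ring
  · rw [tsum_mul_threePoint hk, hₖ]
    push_cast
    field_simp
    ring
end

section
/- For the incoherent-SPS formulas n_a(P) = 4Pγσ/((γσ+P)(γσ+P+γa)) and g^(2)(P) = 2(γσ+P)/(γσ+P+3γa), the population n_a(P) attains its maximum over P > 0 at P = √(γσ(γa+γσ)), with maximal value 4(2 + γa/γσ - 2√(1+γa/γσ))/(γa/γσ)², at which point g^(2) = 2/(3√(1+γa/γσ) - 2). -/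
/-!
Dividing numerator and denominator by `P` gives
`n_a(P) = 4γσ / (P + γσ(γσ + γa)/P + 2γσ + γa)`, so maximizing `n_a` means minimizing
`P + c/P` with `c = γσ(γσ + γa)`, which by AM-GM happens exactly at `P = √c`.
Writing `√c = γσ r` with `r = √(1 + γa/γσ)`, both values are rational in `r`, and
`γa/γσ = (r - 1)(r + 1)` turns them into `4/(1 + r)²` and `2/(3r - 2)`.
-/

open Real

noncomputable def spsPopulation (γσ γa P : ℝ) : ℝ := 4 * P * γσ / ((γσ + P) * (γσ + P + γa))

noncomputable def spsG2 (γσ γa P : ℝ) : ℝ := 2 * (γσ + P) / (γσ + P + 3 * γa)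

theorem two_sqrt_le_add_div {c P : ℝ} (hc : 0 ≤ c) (hP : 0 < P) : 2 * √c ≤ P + c / P := by
  rw [← sub_nonneg, show P + c / P - 2 * √c = (P - √c) ^ 2 / P by
    field_simp
    rw [sub_sq, sq_sqrt hc]
    ring]
  positivity

theorem sqrt_mul_add_eq_mul_sqrt {γσ γa : ℝ} (hσ : 0 < γσ) :
    √(γσ * (γa + γσ)) = γσ * √(1 + γa / γσ) := by
  rw [show γσ * (γa + γσ) = γσ ^ 2 * (1 + γa / γσ) by field_simp; ring,
    sqrt_mul (sq_nonneg γσ), sqrt_sq hσ.le]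

section

variable {γσ γa : ℝ}

theorem spsPopulation_eq_div (hσ : 0 < γσ) (ha : 0 ≤ γa) {P : ℝ} (hP : 0 < P) :
    spsPopulation γσ γa P = 4 * γσ / (P + γσ * (γa + γσ) / P + (2 * γσ + γa)) := by
  unfold spsPopulation
  field_simp
  ring

theorem spsPopulation_le_sqrt (hσ : 0 < γσ) (ha : 0 ≤ γa) {P : ℝ} (hP : 0 < P) :
    spsPopulation γσ γa P ≤ spsPopulation γσ γa √(γσ * (γa + γσ)) := by
  have hc : 0 < γσ * (γa + γσ) := by positivity
  rw [spsPopulation_eq_div hσ ha hP, spsPopulation_eq_div hσ ha (sqrt_pos.2 hc), div_sqrt,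
    ← two_mul]
  gcongr
  exact two_sqrt_le_add_div hc.le hP

theorem spsPopulation_mul_of_sq_eq (hσ : 0 < γσ) (ha : 0 ≤ γa) {r : ℝ} (hr0 : 0 ≤ r)
    (hr : r ^ 2 = 1 + γa / γσ) : spsPopulation γσ γa (γσ * r) = 4 / (1 + r) ^ 2 := by
  have hra : γa = γσ * (r ^ 2 - 1) := by rw [hr]; field_simp; ring
  unfold spsPopulation
  rw [div_eq_div_iff (by positivity) (by positivity), hra]
  ring

theorem spsG2_mul_of_sq_eq (hσ : 0 < γσ) (ha : 0 ≤ γa) {r : ℝ} (hr0 : 0 ≤ r)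
    (hr : r ^ 2 = 1 + γa / γσ) : spsG2 γσ γa (γσ * r) = 2 / (3 * r - 2) := by
  have hra : γa = γσ * (r ^ 2 - 1) := by rw [hr]; field_simp; ring
  have hr1 : 1 ≤ r := by nlinarith [div_nonneg ha hσ.le]
  unfold spsG2
  rw [div_eq_div_iff (by positivity) (by linarith), hra]
  ring

end

theorem four_mul_div_sq_eq_of_sq_eq {a r : ℝ} (ha : a ≠ 0) (hr0 : 0 ≤ r) (hr : r ^ 2 = 1 + a) :
    4 * (2 + a - 2 * r) / a ^ 2 = 4 / (1 + r) ^ 2 := by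
  have hnum : 2 + a - 2 * r = (r - 1) ^ 2 := by linear_combination -hr
  have hden : a ^ 2 = (r - 1) ^ 2 * (1 + r) ^ 2 := by linear_combination (1 - a - r ^ 2) * hr
  have hr1 : r - 1 ≠ 0 := fun h => ha (by rw [← sq_eq_zero_iff, hden, h]; ring)
  rw [hnum, hden]
  field_simp

/-- The incoherent-SPS population na(P) is maximized over P > 0 at
P = √(γσ(γa+γσ)), with the stated maximal value and g² there. -/
theorem stmt10 (γσ γa : ℝ) (hσ : 0 < γσ) (ha : 0 < γa)
    (na g2 : ℝ → ℝ)
    (hna : na = fun P => 4 * P * γσ / ((γσ + P) * (γσ + P + γa)))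
    (hg2 : g2 = fun P => 2 * (γσ + P) / (γσ + P + 3 * γa)) :
    (∀ P, 0 < P → na P ≤ na (Real.sqrt (γσ * (γa + γσ)))) ∧
    na (Real.sqrt (γσ * (γa + γσ))) =
      4 * (2 + γa / γσ - 2 * Real.sqrt (1 + γa / γσ)) / (γa / γσ) ^ 2 ∧
    g2 (Real.sqrt (γσ * (γa + γσ))) = 2 / (3 * Real.sqrt (1 + γa / γσ) - 2) := by
  have hna' : na = spsPopulation γσ γa := hna
  have hg2' : g2 = spsG2 γσ γa := hg2
  subst hna' hg2'
  have hr : √(1 + γa / γσ) ^ 2 = 1 + γa / γσ := sq_sqrt (by positivity)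
  refine ⟨fun P hP => spsPopulation_le_sqrt hσ ha.le hP, ?_, ?_⟩
  · rw [sqrt_mul_add_eq_mul_sqrt hσ, spsPopulation_mul_of_sq_eq hσ ha.le (sqrt_nonneg _) hr,
      four_mul_div_sq_eq_of_sq_eq (by positivity) (sqrt_nonneg _) hr]
  · rw [sqrt_mul_add_eq_mul_sqrt hσ, spsG2_mul_of_sq_eq hσ ha.le (sqrt_nonneg _) hr]
end

section
/- The envelope of all incoherent-SPS trajectories in the (n_a, g^(2)) plane is g^(2) = 2n_a/(3 - 2n_a): for every γa/γσ > 0 and P > 0, the point (n_a(P), g^(2)(P)) with n_a = 4Pγσ/((γσ+P)(γσ+P+γa)) and g^(2) = 2(γσ+P)/(γσ+P+3γa) satisfies g^(2) ≥ 2n_a/(3-2n_a). -/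
/-! With `s = γσ + P`, AM-GM gives `4 P γσ ≤ s²`, hence `n_a ≤ s / (s + γa) < 1`. The envelope
`x ↦ 2x / (3 - 2x)` is increasing below `3/2` and sends `s / (s + γa)` exactly to
`g² = 2s / (s + 3γa)`, so `g² ≥ 2n_a / (3 - 2n_a)`, with equality when `P = γσ`. -/

open Set

noncomputable def envelope (x : ℝ) : ℝ := 2 * x / (3 - 2 * x)

lemma envelope_monotoneOn : MonotoneOn envelope (Iio (3 / 2)) := by
  intro x hx y hy hxy
  have hx' : 0 < 3 - 2 * x := by linarith [mem_Iio.1 hx]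
  have hy' : 0 < 3 - 2 * y := by linarith [mem_Iio.1 hy]
  rw [envelope, envelope, div_le_div_iff₀ hx' hy']
  nlinarith

lemma envelope_div_add {s a : ℝ} (hsa : s + a ≠ 0) :
    envelope (s / (s + a)) = 2 * s / (s + 3 * a) := by
  have hden : 3 - 2 * (s / (s + a)) = (s + 3 * a) / (s + a) := by field_simp; ring
  rw [envelope, hden, ← mul_div_assoc, div_div_div_cancel_right₀ hsa]

lemma four_mul_mul_div_le {x y c : ℝ} (hxy : 0 < x + y) (hc : 0 < x + y + c) :
    4 * x * y / ((x + y) * (x + y + c)) ≤ (x + y) / (x + y + c) := by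
  calc 4 * x * y / ((x + y) * (x + y + c))
      ≤ (x + y) ^ 2 / ((x + y) * (x + y + c)) := by gcongr; exact four_mul_le_sq_add x y
    _ = (x + y) / (x + y + c) := by field_simp

/-- Every point on an incoherent-SPS trajectory lies above the envelope
g² = 2na/(3-2na). -/
theorem stmt12 (P γσ γa : ℝ) (hP : 0 < P) (hσ : 0 < γσ) (ha : 0 < γa)
    (na g2 : ℝ)
    (hna : na = 4 * P * γσ / ((γσ + P) * (γσ + P + γa)))
    (hg2 : g2 = 2 * (γσ + P) / (γσ + P + 3 * γa)) :
    na < 3 / 2 ∧ 2 * na / (3 - 2 * na) ≤ g2 := by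
  have hs : 0 < γσ + P := by positivity
  have hbound : na ≤ (γσ + P) / (γσ + P + γa) := by
    rw [hna, mul_right_comm]
    exact four_mul_mul_div_le hs (by positivity)
  have hlt : (γσ + P) / (γσ + P + γa) < 3 / 2 :=
    ((div_lt_one (by positivity)).2 (by linarith)).trans (by norm_num)
  have hna_lt : na < 3 / 2 := hbound.trans_lt hlt
  refine ⟨hna_lt, ?_⟩
  calc 2 * na / (3 - 2 * na) = envelope na := rfl
    _ ≤ envelope ((γσ + P) / (γσ + P + γa)) := envelope_monotoneOn hna_lt hlt hbound
    _ = g2 := by rw [envelope_div_add (by positivity), hg2]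
end

section
/- The function g^(2)_*(n_a) = ⌊n_a⌋(2n_a - ⌊n_a⌋ - 1)/n_a² defining the Fock-duo boundary is continuous on (0,∞) and non-decreasing in n_a, with g^(2)_*(n_a) = 0 for 0 < n_a ≤ 1 and g^(2)_*(n_a) → 1 as n_a → ∞. -/
/-!
Write `n = ⌊x⌋` and `r = x - n`. On `[n, n + 1]` the boundary is the rational function
`n (2x - n - 1) / x²`, which is non-decreasing there, and at each integer `k` the two adjacent
pieces both take the value `1 - 1/k`; this gives monotonicity. Substituting `n = x - r` gives
`g(x) = 1 - 1/x + r(1 - r)/x²`, and `r(1 - r)` is a continuous function of `x` because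
`t(1 - t)` vanishes at both `0` and `1`; this gives continuity and the limit `1`.
-/

open Set Filter Topology

noncomputable section

def fockBranch (n x : ℝ) : ℝ := n * (2 * x - n - 1) / x ^ 2

def fockDuoBoundary (x : ℝ) : ℝ := fockBranch ⌊x⌋ x

end

/-- `fockBranch n b - fockBranch n a = n (b - a) (a (n + 1 - b) + b (n + 1 - a)) / (a² b²)`. -/
lemma fockBranch_monotoneOn {n : ℝ} (hn : 0 ≤ n) : MonotoneOn (fockBranch n) (Ioc 0 (n + 1)) := by
  rintro a ⟨ha, -⟩ b ⟨-, hb⟩ hab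
  have hb0 : 0 < b := ha.trans_le hab
  unfold fockBranch
  rw [div_le_div_iff₀ (by positivity) (by positivity)]
  have key : 0 ≤ n * (b - a) * (a * (n + 1 - b) + b * (n + 1 - a)) := by
    have := sub_nonneg.2 hab
    have := sub_nonneg.2 hb
    have := sub_nonneg.2 (hab.trans hb)
    positivity
  linear_combination key

lemma fockBranch_self {k : ℝ} (hk : k ≠ 0) : fockBranch k k = 1 - 1 / k := by
  unfold fockBranch
  field_simp
  ring

lemma fockBranch_add_one {n : ℝ} (hn : n + 1 ≠ 0) : fockBranch n (n + 1) = 1 - 1 / (n + 1) := by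
  unfold fockBranch
  field_simp
  ring

lemma fockDuoBoundary_eq (x : ℝ) :
    fockDuoBoundary x = (x ^ 2 - x + Int.fract x * (1 - Int.fract x)) / x ^ 2 := by
  rw [fockDuoBoundary, fockBranch, Int.fract]
  ring

lemma fockDuoBoundary_eq_one_sub {x : ℝ} (hx : x ≠ 0) :
    fockDuoBoundary x = 1 - 1 / x + Int.fract x * (1 - Int.fract x) / x ^ 2 := by
  rw [fockDuoBoundary_eq]
  field_simp

lemma continuous_fract_mul_one_sub_fract :
    Continuous fun x : ℝ => Int.fract x * (1 - Int.fract x) :=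
  ContinuousOn.comp_fract'' (f := fun t : ℝ => t * (1 - t)) (by fun_prop) (by norm_num)

lemma continuousOn_fockDuoBoundary : ContinuousOn fockDuoBoundary (Ioi 0) := by
  simp_rw [funext fockDuoBoundary_eq]
  have hnum := ((continuous_pow 2).sub continuous_id).add continuous_fract_mul_one_sub_fract
  exact hnum.continuousOn.div (continuous_pow 2).continuousOn fun x hx => pow_ne_zero 2 (ne_of_gt hx)

lemma monotoneOn_fockDuoBoundary : MonotoneOn fockDuoBoundary (Ioi 0) := by
  intro x hx y hy hxy
  have hm : (0 : ℝ) ≤ ⌊x⌋ := by exact_mod_cast Int.floor_nonneg.2 (le_of_lt hx)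
  have hM : (0 : ℝ) ≤ ⌊y⌋ := by exact_mod_cast Int.floor_nonneg.2 (le_of_lt hy)
  have hx' : x ∈ Ioc 0 ((⌊x⌋ : ℝ) + 1) := ⟨hx, (Int.lt_floor_add_one x).le⟩
  have hy' : y ∈ Ioc 0 ((⌊y⌋ : ℝ) + 1) := ⟨hy, (Int.lt_floor_add_one y).le⟩
  rcases (Int.floor_le_floor hxy).eq_or_lt with hsame | hlt
  · unfold fockDuoBoundary
    rw [← hsame] at hy' ⊢
    exact fockBranch_monotoneOn hm hx' hy' hxy
  · have hstep : (⌊x⌋ : ℝ) + 1 ≤ ⌊y⌋ := by exact_mod_cast hlt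
    have hpos : (0 : ℝ) < ⌊x⌋ + 1 := by positivity
    calc fockDuoBoundary x
        ≤ fockBranch ⌊x⌋ (⌊x⌋ + 1) := fockBranch_monotoneOn hm hx' ⟨hpos, le_rfl⟩ hx'.2
      _ = 1 - 1 / (⌊x⌋ + 1) := fockBranch_add_one hpos.ne'
      _ ≤ 1 - 1 / ⌊y⌋ := sub_le_sub_left (one_div_le_one_div_of_le hpos hstep) 1
      _ = fockBranch ⌊y⌋ ⌊y⌋ := (fockBranch_self (hpos.trans_le hstep).ne').symm
      _ ≤ fockDuoBoundary y :=
        fockBranch_monotoneOn hM ⟨hpos.trans_le hstep, by linarith⟩ hy' (Int.floor_le y)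

lemma fockDuoBoundary_eq_zero {x : ℝ} (hx : 0 < x) (hx1 : x ≤ 1) : fockDuoBoundary x = 0 := by
  rcases hx1.eq_or_lt with rfl | hx1
  · norm_num [fockDuoBoundary, fockBranch]
  · simp [fockDuoBoundary, fockBranch, Int.floor_eq_zero_iff.2 ⟨hx.le, hx1⟩]

lemma tendsto_fockDuoBoundary_atTop : Tendsto fockDuoBoundary atTop (𝓝 1) := by
  have hinv : Tendsto (fun x : ℝ => 1 / x) atTop (𝓝 0) := by
    simpa only [one_div] using tendsto_inv_atTop_zero
  have hinv_sq : Tendsto (fun x : ℝ => 1 / x ^ 2) atTop (𝓝 0) :=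
    hinv.comp (tendsto_pow_atTop two_ne_zero)
  have hfract : Tendsto (fun x : ℝ => Int.fract x * (1 - Int.fract x) / x ^ 2) atTop (𝓝 0) := by
    refine squeeze_zero (fun x => ?_) (fun x => ?_) hinv_sq
    · have := sub_nonneg.2 (Int.fract_lt_one x).le
      have := Int.fract_nonneg x
      positivity
    · gcongr
      nlinarith [Int.fract_nonneg x, Int.fract_lt_one x]
  have hlim := (tendsto_const_nhds (x := (1 : ℝ)).sub hinv).add hfract
  rw [sub_zero, add_zero] at hlim
  refine hlim.congr' ?_
  filter_upwards [eventually_ne_atTop 0] with x hx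
  exact (fockDuoBoundary_eq_one_sub hx).symm

/-- The Fock-duo boundary g²*(na) = ⌊na⌋(2na-⌊na⌋-1)/na² is continuous and
non-decreasing on (0,∞), vanishes for 0 < na ≤ 1, and tends to 1 as na → ∞. -/
theorem stmt17 (f : ℝ → ℝ)
    (hf : f = fun na => (⌊na⌋ : ℝ) * (2 * na - (⌊na⌋ : ℝ) - 1) / na ^ 2) :
    ContinuousOn f (Set.Ioi 0) ∧
    MonotoneOn f (Set.Ioi 0) ∧
    (∀ na : ℝ, 0 < na → na ≤ 1 → f na = 0) ∧
    Filter.Tendsto f Filter.atTop (nhds 1) := by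
  have hf : f = fockDuoBoundary := hf
  subst hf
  exact ⟨continuousOn_fockDuoBoundary, monotoneOn_fockDuoBoundary,
    fun _ => fockDuoBoundary_eq_zero, tendsto_fockDuoBoundary_atTop⟩
end
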